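/- arXiv:2306.10393 — 5 statements merged into one kernel-verified Lean document; each statement's English description precedes it below -/
import Mathlib

section
/- Let p be a prime, let ξ_0, …, ξ_s be elements of the field ℚ_p of p-adic numbers, and for each n ∈ ℕ let L_n = l_{0,n}X_0 + ⋯ + l_{s,n}X_s be a linear form with integer coefficients l_{i,n} ∈ ℤ. If for every n one has 0 < (max_{0≤i≤s} |l_{i,n}|) · |l_{0,n}ξ_0 + ⋯ + l_{s,n}ξ_s|_p and this quantity tends to 0 as n → ∞, then at least one of ξ_0, …, ξ_s is irrational, i.e. does not lie in the image of ℚ under the canonical embedding ℚ ↪ ℚ_p. -/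
/-!
If every `ξ i` were a rational `q i`, clear denominators: `b • q i = a i ∈ ℤ` with `b ≠ 0`.
Then `N = ∑ l i * a i` is an integer equal to `b · L` in `ℚ_p`, nonzero because `L ≠ 0`.
For a nonzero integer `|N| · |N|_p ≥ 1`, while `|N| ≤ max |l i| · ∑ |a i|` and `|N|_p ≤ |L|_p`,
so `max |l i| · |L|_p` stays above the positive constant `(∑ |a i| + 1)⁻¹` and cannot tend to `0`.
-/

open Filter

theorem Padic.one_le_abs_mul_norm_intCast {p : ℕ} [Fact p.Prime] {m : ℤ} (hm : m ≠ 0) :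
    1 ≤ |(m : ℝ)| * ‖(m : ℚ_[p])‖ := by
  have hp : (0 : ℝ) < p := by exact_mod_cast (Fact.out : p.Prime).pos
  have hpow : ((p : ℤ) ^ padicValInt p m : ℝ) ≤ |(m : ℝ)| := by
    exact_mod_cast Int.le_of_dvd (abs_pos.mpr hm) ((dvd_abs _ _).mpr (padicValInt_dvd m))
  rw [Padic.norm_eq_zpow_neg_valuation (by exact_mod_cast hm), Padic.valuation_intCast,
    zpow_neg, zpow_natCast, ← div_eq_mul_inv, one_le_div (by positivity)]
  exact_mod_cast hpow

theorem Rat.exist_integer_multiples {ι : Type*} [Finite ι] (q : ι → ℚ) :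
    ∃ b : ℤ, b ≠ 0 ∧ ∃ a : ι → ℤ, ∀ i, (a i : ℚ) = b * q i := by
  obtain ⟨⟨b, hb⟩, hq⟩ := IsLocalization.exist_integer_multiples_of_finite (nonZeroDivisors ℤ) q
  choose a ha using hq
  refine ⟨b, nonZeroDivisors.ne_zero hb, a, fun i => ?_⟩
  simpa [zsmul_eq_mul] using ha i

theorem Int.abs_sum_mul_le_sup_natAbs_mul {ι : Type*} [Fintype ι] (l a : ι → ℤ) :
    |∑ i, l i * a i| ≤ (Finset.univ.sup fun i => (l i).natAbs : ℕ) * ∑ i, |a i| := by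
  rw [Finset.mul_sum]
  refine (Finset.abs_sum_le_sum_abs _ _).trans (Finset.sum_le_sum fun i hi => ?_)
  rw [abs_mul]
  gcongr
  rw [Int.abs_eq_natAbs]
  exact_mod_cast Finset.le_sup (f := fun i => (l i).natAbs) hi

theorem Padic.exists_pos_le_sup_natAbs_mul_norm_of_rat {p : ℕ} [Fact p.Prime] {ι : Type*}
    [Fintype ι] (q : ι → ℚ) :
    ∃ C : ℝ, 0 < C ∧ ∀ l : ι → ℤ, ∑ i, (l i : ℚ_[p]) * q i ≠ 0 →
      C ≤ ((Finset.univ.sup fun i => (l i).natAbs : ℕ) : ℝ) * ‖∑ i, (l i : ℚ_[p]) * q i‖ := by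
  obtain ⟨b, hb, a, ha⟩ := Rat.exist_integer_multiples q
  refine ⟨(∑ i, |(a i : ℝ)| + 1)⁻¹, by positivity, fun l hL => ?_⟩
  set L := ∑ i, (l i : ℚ_[p]) * q i
  set M := Finset.univ.sup fun i => (l i).natAbs
  set N := ∑ i, l i * a i
  have hNL : (N : ℚ_[p]) = b * L := by
    have ha' : ∀ i, (a i : ℚ_[p]) = b * q i := fun i => by
      exact_mod_cast congrArg (Rat.cast : ℚ → ℚ_[p]) (ha i)
    simp only [N, L, Int.cast_sum, Int.cast_mul, ha', Finset.mul_sum]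
    exact Finset.sum_congr rfl fun i _ => by ring
  have hN : N ≠ 0 := by
    intro h
    rw [h, Int.cast_zero, eq_comm, mul_eq_zero] at hNL
    exact hNL.elim (by exact_mod_cast hb) hL
  have habs : |(N : ℝ)| ≤ M * (∑ i, |(a i : ℝ)| + 1) := by
    calc |(N : ℝ)| ≤ M * ∑ i, |(a i : ℝ)| := by
          exact_mod_cast Int.abs_sum_mul_le_sup_natAbs_mul l a
      _ ≤ M * (∑ i, |(a i : ℝ)| + 1) := by gcongr; linarith
  have hnorm : ‖(N : ℚ_[p])‖ ≤ ‖L‖ := by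
    rw [hNL, norm_mul]
    exact mul_le_of_le_one_left (norm_nonneg _) (Padic.norm_int_le_one b)
  rw [inv_le_iff_one_le_mul₀ (by positivity)]
  calc 1 ≤ |(N : ℝ)| * ‖(N : ℚ_[p])‖ := Padic.one_le_abs_mul_norm_intCast hN
    _ ≤ (M * (∑ i, |(a i : ℝ)| + 1)) * ‖L‖ := by gcongr
    _ = _ := by ring

/-- Lemma 2.1, classical p-adic irrationality criterion.
If `ξ 0, …, ξ s ∈ ℚ_p` and `L n = ∑ i, l n i • ξ i` are integer linear forms with
`0 < (max_i |l n i|) · ‖L n‖_p` for all `n` and this quantity tends to `0`,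
then some `ξ i` is irrational. -/
theorem padic_irrationality_criterion_classical
    (p : ℕ) [Fact p.Prime] (s : ℕ) (ξ : Fin (s + 1) → ℚ_[p])
    (l : ℕ → Fin (s + 1) → ℤ)
    (hpos : ∀ n : ℕ,
      0 < ((Finset.univ.sup fun i => (l n i).natAbs : ℕ) : ℝ) *
        ‖∑ i, (l n i : ℚ_[p]) * ξ i‖)
    (hlim : Tendsto
      (fun n : ℕ => ((Finset.univ.sup fun i => (l n i).natAbs : ℕ) : ℝ) *
        ‖∑ i, (l n i : ℚ_[p]) * ξ i‖) atTop (nhds 0)) :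
    ∃ i, ξ i ∉ Set.range ((↑) : ℚ → ℚ_[p]) := by
  by_contra! hrat
  choose q hq using hrat
  obtain rfl : (fun i => (q i : ℚ_[p])) = ξ := funext hq
  obtain ⟨C, hC, hle⟩ := Padic.exists_pos_le_sup_natAbs_mul_norm_of_rat (p := p) q
  obtain ⟨n, hn⟩ := (hlim.eventually (gt_mem_nhds hC)).exists
  have hL : ∑ i, (l n i : ℚ_[p]) * q i ≠ 0 :=
    norm_pos_iff.mp (pos_of_mul_pos_right (hpos n) (Nat.cast_nonneg _))
  exact (hle (l n) hL).not_gt hn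
end

section
/- Let p be a prime, let ξ_0, …, ξ_s ∈ ℚ_p with ξ_0 ≠ 0, and for each n ∈ ℕ let L_n = l_{0,n}X_0 + ⋯ + l_{s,n}X_s be a nonzero linear form with integer coefficients. Suppose there is an unbounded subset I ⊆ ℕ and for each n ∈ I a prime number l(n) such that, as n → ∞ along I: (1) (max_{0≤i≤s} |l_{i,n}|) · |l_{0,n}ξ_0 + ⋯ + l_{s,n}ξ_s|_p → 0; (2) for all n ∈ I one has v_{l(n)}(l_{0,n}) < v_{l(n)}(l_{i,n}) for every i = 1, …, s; and (3) l(n) → ∞. Then at least one of ξ_0, …, ξ_s is irrational (not in the image of ℚ ↪ ℚ_p). -/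
/-!
If every `ξ i` were rational, write `d * ξ i = a i` with integers `d ≠ 0` and `a i`. The integer
`N n = ∑ i, l n i * a i` satisfies `|N n| ≤ (s + 1) * max |l n i| * max |a i|`, and `d * Λ n = N n`
for the linear form `Λ n`, so `N n ≠ 0` forces `max |l n i| * ‖Λ n‖_p ≥ 1 / ((s + 1) * max |a i|)`,
contradicting (1). Once `l(n) > |a 0|`, the prime `l(n)` divides every term of `N n` except
`l n 0 * a 0` strictly more often than it divides `l n 0 * a 0`, so indeed `N n ≠ 0`.
-/

open Filter Finset

theorem Padic.inv_natAbs_le_norm_intCast {p : ℕ} [Fact p.Prime] {N : ℤ} (hN : N ≠ 0) :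
    (N.natAbs : ℝ)⁻¹ ≤ ‖(N : ℚ_[p])‖ := by
  have hdvd : (p : ℤ) ^ padicValInt p N ∣ N := padicValInt_dvd N
  rw [Padic.norm_eq_zpow_neg_valuation (by exact_mod_cast hN), Padic.valuation_intCast, zpow_neg,
    zpow_natCast]
  refine inv_anti₀ (pow_pos (mod_cast (Fact.out : p.Prime).pos) _) ?_
  exact_mod_cast Nat.le_of_dvd (Int.natAbs_pos.2 hN) (by simpa using Int.natAbs_dvd_natAbs.2 hdvd)

theorem exists_intCast_mul_eq_intCast_of_mem_range_ratCast {K ι : Type*} [DivisionRing K]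
    [CharZero K] [Finite ι] {ξ : ι → K} (h : ∀ i, ξ i ∈ Set.range ((↑) : ℚ → K)) :
    ∃ d : ℤ, d ≠ 0 ∧ ∃ a : ι → ℤ, ∀ i, (d : K) * ξ i = a i := by
  choose r hr using h
  obtain ⟨⟨d, hd⟩, hint⟩ := IsLocalization.exist_integer_multiples_of_finite (nonZeroDivisors ℤ) r
  choose a ha using hint
  refine ⟨d, nonZeroDivisors.ne_zero hd, a, fun i => ?_⟩
  have := congrArg ((↑) : ℚ → K) (ha i)
  simp only [algebraMap_int_eq, eq_intCast, zsmul_eq_mul] at this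
  push_cast at this
  rw [this, hr]

theorem Int.natAbs_sum_mul_le {ι : Type*} [Fintype ι] (l a : ι → ℤ) :
    (∑ i, l i * a i).natAbs ≤
      Fintype.card ι * (univ.sup fun i => (l i).natAbs) * univ.sup fun i => (a i).natAbs := by
  calc (∑ i, l i * a i).natAbs ≤ ∑ i, (l i * a i).natAbs := Int.natAbs_sum_le _ _
    _ ≤ ∑ _i : ι, (univ.sup fun i => (l i).natAbs) * univ.sup fun i => (a i).natAbs := by
      gcongr with i
      rw [Int.natAbs_mul]
      exact Nat.mul_le_mul (le_sup (f := fun i => (l i).natAbs) (mem_univ i))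
        (le_sup (f := fun i => (a i).natAbs) (mem_univ i))
    _ = _ := by rw [sum_const, card_univ, smul_eq_mul, mul_assoc]

theorem apply_ne_zero_of_emultiplicity_lt {ι α : Type*} [MonoidWithZero α] {q : α} {l : ι → α}
    (hl : l ≠ 0) {i₀ : ι} (hlt : ∀ i ≠ i₀, emultiplicity q (l i₀) < emultiplicity q (l i)) :
    l i₀ ≠ 0 := by
  intro h0
  refine hl (funext fun i => ?_)
  by_cases hi : i = i₀
  · rw [hi, h0, Pi.zero_apply]
  · simpa [h0] using hlt i hi

theorem sum_mul_ne_zero_of_emultiplicity_lt {ι R : Type*} [Fintype ι] [CommRing R] [IsDomain R]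
    {q : R} (hq : Prime q) {l a : ι → R} {i₀ : ι} (hfin : FiniteMultiplicity q (l i₀))
    (ha : ¬ q ∣ a i₀) (hlt : ∀ i ≠ i₀, emultiplicity q (l i₀) < emultiplicity q (l i)) :
    ∑ i, l i * a i ≠ 0 := by
  classical
  set k := multiplicity q (l i₀)
  have hk : emultiplicity q (l i₀) = k := hfin.emultiplicity_eq_multiplicity
  have hterm : ¬ q ^ (k + 1) ∣ l i₀ * a i₀ := by
    intro h
    have := le_emultiplicity_of_pow_dvd h
    rw [emultiplicity_mul hq, hk, emultiplicity_eq_zero.2 ha, add_zero] at this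
    norm_cast at this
    omega
  have hrest : q ^ (k + 1) ∣ ∑ i ∈ univ.erase i₀, l i * a i := by
    refine dvd_sum fun i hi => dvd_mul_of_dvd_left (pow_dvd_of_le_emultiplicity ?_) _
    push_cast
    exact Order.add_one_le_of_lt (hk ▸ hlt i (ne_of_mem_erase hi))
  rw [← add_sum_erase _ _ (mem_univ i₀)]
  intro h0
  exact hterm ((dvd_add_left hrest).mp (h0 ▸ dvd_zero _))

theorem inv_le_sup_natAbs_mul_norm_sum {p : ℕ} [Fact p.Prime] {ι : Type*} [Fintype ι]
    {ξ : ι → ℚ_[p]} {d : ℤ} {a : ι → ℤ} (hξ : ∀ i, (d : ℚ_[p]) * ξ i = a i) {l : ι → ℤ}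
    (hN : ∑ i, l i * a i ≠ 0) :
    ((Fintype.card ι * univ.sup fun i => (a i).natAbs : ℕ) : ℝ)⁻¹ ≤
      (univ.sup fun i => (l i).natAbs : ℕ) * ‖∑ i, (l i : ℚ_[p]) * ξ i‖ := by
  set M : ℕ := univ.sup fun i => (l i).natAbs
  set A : ℕ := Fintype.card ι * univ.sup fun i => (a i).natAbs
  have hbound : (∑ i, l i * a i).natAbs ≤ M * A :=
    (Int.natAbs_sum_mul_le l a).trans_eq (by ring)
  have hN' : 0 < (∑ i, l i * a i).natAbs := Int.natAbs_pos.2 hN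
  have hM : (0 : ℝ) < M := by exact_mod_cast Nat.pos_of_mul_pos_right (hN'.trans_le hbound)
  have hA : (0 : ℝ) < A := by exact_mod_cast Nat.pos_of_mul_pos_left (hN'.trans_le hbound)
  have hnorm : ‖((∑ i, l i * a i : ℤ) : ℚ_[p])‖ ≤ ‖∑ i, (l i : ℚ_[p]) * ξ i‖ := by
    have : ((∑ i, l i * a i : ℤ) : ℚ_[p]) = d * ∑ i, (l i : ℚ_[p]) * ξ i := by
      push_cast
      rw [mul_sum]
      exact sum_congr rfl fun i _ => by rw [← hξ, mul_left_comm]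
    rw [this, norm_mul]
    exact mul_le_of_le_one_left (norm_nonneg _) (Padic.norm_int_le_one d)
  calc (A : ℝ)⁻¹ = M * ((M * A : ℕ) : ℝ)⁻¹ := by push_cast; field_simp
    _ ≤ M * ((∑ i, l i * a i).natAbs : ℝ)⁻¹ := by gcongr
    _ ≤ M * ‖∑ i, (l i : ℚ_[p]) * ξ i‖ := by
      gcongr
      exact (Padic.inv_natAbs_le_norm_intCast hN).trans hnorm

/-- new p-adic irrationality criterion.
Here the non-vanishing condition is replaced by a condition on the `l(n)`-adic
valuation of the coefficients (`emultiplicity` is the valuation on `ℤ` with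
value `⊤` at `0`). -/
theorem padic_irrationality_criterion_valuation
    (p : ℕ) [Fact p.Prime] (s : ℕ) (ξ : Fin (s + 1) → ℚ_[p])
    (hξ0 : ξ 0 ≠ 0)
    (l : ℕ → Fin (s + 1) → ℤ)
    (hl : ∀ n : ℕ, l n ≠ 0)
    (I : Set ℕ) (hI : ∀ m : ℕ, ∃ n ∈ I, m ≤ n)
    (lpr : ℕ → ℕ) (hlpr : ∀ n ∈ I, (lpr n).Prime)
    (h1 : Tendsto
      (fun n : ℕ => ((Finset.univ.sup fun i => (l n i).natAbs : ℕ) : ℝ) *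
        ‖∑ i, (l n i : ℚ_[p]) * ξ i‖) (atTop ⊓ Filter.principal I) (nhds 0))
    (h2 : ∀ n ∈ I, ∀ i : Fin (s + 1), i ≠ 0 →
      emultiplicity ((lpr n : ℤ)) (l n 0) < emultiplicity ((lpr n : ℤ)) (l n i))
    (h3 : Tendsto lpr (atTop ⊓ Filter.principal I) atTop) :
    ∃ i, ξ i ∉ Set.range ((↑) : ℚ → ℚ_[p]) := by
  by_contra! hrat
  obtain ⟨d, hd, a, hξ⟩ := exists_intCast_mul_eq_intCast_of_mem_range_ratCast hrat
  have ha0 : a 0 ≠ 0 := by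
    rw [← Int.cast_ne_zero (α := ℚ_[p]), ← hξ]
    exact mul_ne_zero (Int.cast_ne_zero.2 hd) hξ0
  have hA : (0 : ℝ) < ((s + 1) * univ.sup fun i => (a i).natAbs : ℕ) := by
    exact_mod_cast Nat.mul_pos s.succ_pos
      ((Int.natAbs_pos.2 ha0).trans_le (le_sup (f := fun i => (a i).natAbs) (mem_univ 0)))
  have : (atTop ⊓ 𝓟 I).NeBot := inf_principal_neBot_iff.2 fun U hU => by
    obtain ⟨m, hm⟩ := mem_atTop_sets.1 hU
    obtain ⟨n, hnI, hmn⟩ := hI m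
    exact ⟨n, hm n hmn, hnI⟩
  obtain ⟨n, hsmall, hlarge, hnI⟩ := ((h1.eventually_lt_const (inv_pos.2 hA)).and
    ((h3.eventually_gt_atTop (a 0).natAbs).and
      (eventually_inf_principal.2 (.of_forall fun _ => id)))).exists
  have hq : Prime (lpr n : ℤ) := Nat.prime_iff_prime_int.1 (hlpr n hnI)
  have hl0 : l n 0 ≠ 0 := apply_ne_zero_of_emultiplicity_lt (hl n) (h2 n hnI)
  have hN : ∑ i, l n i * a i ≠ 0 := sum_mul_ne_zero_of_emultiplicity_lt hq
    (Int.finiteMultiplicity_iff.2 ⟨by simpa using (hlpr n hnI).ne_one, hl0⟩)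
    (fun hdvd => ha0 (Int.eq_zero_of_dvd_of_natAbs_lt_natAbs hdvd (by simpa using hlarge)))
    (h2 n hnI)
  have hlower := inv_le_sup_natAbs_mul_norm_sum hξ hN
  rw [Fintype.card_fin] at hlower
  exact hlower.not_gt hsmall
end

section
/- Let ξ_0, …, ξ_s ∈ ℝ with ξ_0 ≠ 0, and for each n ∈ ℕ let L_n = l_{0,n}X_0 + ⋯ + l_{s,n}X_s be a nonzero linear form with integer coefficients. Suppose there is an unbounded subset I ⊆ ℕ and for each n ∈ I a prime number l(n) such that, as n → ∞ along I: (1) |l_{0,n}ξ_0 + ⋯ + l_{s,n}ξ_s| → 0; (2) for all n ∈ I one has v_{l(n)}(l_{0,n}) < v_{l(n)}(l_{i,n}) for every i = 1, …, s; and (3) l(n) → ∞. Then at least one of ξ_0, …, ξ_s is irrational. -/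
/-!
If all `ξ i` were rational, say `ξ i = a i / b`, then `b (l₀ ξ₀ + ⋯ + lₛ ξₛ)` is an integer of
absolute value `< 1` for large `n ∈ I`, hence `l₀ a₀ + ⋯ + lₛ aₛ = 0`. But once the prime `l(n)`
exceeds `|a₀|`, the term `l₀ a₀` has strictly smaller `l(n)`-adic valuation than every other term,
so the sum cannot vanish.
-/

open Filter

theorem add_sum_ne_zero_of_emultiplicity_lt {R ι : Type*} [CommRing R] {p y : R} {z : ι → R}
    (s : Finset ι) (hy : FiniteMultiplicity p y)
    (hz : ∀ i ∈ s, emultiplicity p y < emultiplicity p (z i)) :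
    y + ∑ i ∈ s, z i ≠ 0 := by
  set k := multiplicity p y
  have hdvd : p ^ (k + 1) ∣ ∑ i ∈ s, z i := Finset.dvd_sum fun i hi =>
    pow_dvd_of_le_emultiplicity <| by
      have := hz i hi
      rw [hy.emultiplicity_eq_multiplicity] at this
      exact_mod_cast Order.add_one_le_of_lt this
  intro hsum
  rw [add_eq_zero_iff_eq_neg] at hsum
  exact hy.not_pow_dvd_of_multiplicity_lt (Nat.lt_succ_self k) (hsum ▸ (dvd_neg.mpr hdvd))

theorem Int.sum_mul_ne_zero_of_emultiplicity_lt {s : ℕ} {p : ℤ} (hp : Prime p)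
    {l a : Fin (s + 1) → ℤ} (hl : l ≠ 0) (ha : ¬ p ∣ a 0)
    (h : ∀ i, i ≠ 0 → emultiplicity p (l 0) < emultiplicity p (l i)) :
    ∑ i, l i * a i ≠ 0 := by
  have hl0 : l 0 ≠ 0 := by
    refine fun hl0 => hl (funext fun i => ?_)
    by_cases hi : i = 0
    · rw [hi, hl0, Pi.zero_apply]
    · simpa [hl0] using h i hi
  have ha0 : a 0 ≠ 0 := fun ha0 => ha (ha0 ▸ dvd_zero p)
  have hmul0 : emultiplicity p (l 0 * a 0) = emultiplicity p (l 0) := by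
    rw [emultiplicity_mul hp, emultiplicity_eq_zero.mpr ha, add_zero]
  rw [Fin.sum_univ_succ]
  refine add_sum_ne_zero_of_emultiplicity_lt _
    (Int.finiteMultiplicity_iff.mpr ⟨hp.not_isUnit ∘ Int.isUnit_iff_natAbs_eq.mpr,
      mul_ne_zero hl0 ha0⟩) fun i _ => ?_
  rw [hmul0]
  exact (h i.succ i.succ_ne_zero).trans_le
    (emultiplicity_le_emultiplicity_of_dvd_right (dvd_mul_right _ _))

theorem exists_nat_mul_eq_int_of_not_irrational {ι : Type*} [Fintype ι] {ξ : ι → ℝ}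
    (hξ : ∀ i, ¬ Irrational (ξ i)) :
    ∃ b : ℕ, 0 < b ∧ ∃ a : ι → ℤ, ∀ i, (a i : ℝ) = b * ξ i := by
  choose r hr using fun i => not_not.mp (hξ i)
  refine ⟨∏ i, (r i).den, Finset.prod_pos fun i _ => (r i).pos, ?_⟩
  choose c hc using fun i => Finset.dvd_prod_of_mem (fun j => (r j).den) (Finset.mem_univ i)
  refine ⟨fun i => c i * (r i).num, fun i => ?_⟩
  have hnum := congrArg (fun q : ℚ => (c i : ℝ) * q) (Rat.den_mul_eq_num (r i))
  push_cast at hnum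
  rw [hc i, ← hr i]
  push_cast
  linear_combination -hnum

theorem Int.sum_mul_eq_zero_of_abs_sum_mul_lt {ι : Type*} [Fintype ι] {l a : ι → ℤ} {ξ : ι → ℝ}
    {b : ℕ} (hb : 0 < b) (ha : ∀ i, (a i : ℝ) = b * ξ i) (h : |∑ i, (l i : ℝ) * ξ i| < 1 / b) :
    ∑ i, l i * a i = 0 := by
  have hsum : ((∑ i, l i * a i : ℤ) : ℝ) = b * ∑ i, (l i : ℝ) * ξ i := by
    push_cast
    rw [Finset.mul_sum]
    exact Finset.sum_congr rfl fun i _ => by rw [ha i]; ring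
  have hb' : (0 : ℝ) < b := by exact_mod_cast hb
  rw [← Int.abs_lt_one_iff, ← Int.cast_lt (R := ℝ), Int.cast_one, Int.cast_abs, hsum, abs_mul,
    abs_of_pos hb']
  calc (b : ℝ) * |∑ i, (l i : ℝ) * ξ i| < b * (1 / b) := by gcongr
    _ = 1 := by field_simp

/-- Archimedean analogue of the new irrationality criterion. -/
theorem real_irrationality_criterion_valuation
    (s : ℕ) (ξ : Fin (s + 1) → ℝ)
    (hξ0 : ξ 0 ≠ 0)
    (l : ℕ → Fin (s + 1) → ℤ)
    (hl : ∀ n : ℕ, l n ≠ 0)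
    (I : Set ℕ) (hI : ∀ m : ℕ, ∃ n ∈ I, m ≤ n)
    (lpr : ℕ → ℕ) (hlpr : ∀ n ∈ I, (lpr n).Prime)
    (h1 : Tendsto (fun n : ℕ => |∑ i, (l n i : ℝ) * ξ i|)
      (atTop ⊓ Filter.principal I) (nhds 0))
    (h2 : ∀ n ∈ I, ∀ i : Fin (s + 1), i ≠ 0 →
      emultiplicity ((lpr n : ℤ)) (l n 0) < emultiplicity ((lpr n : ℤ)) (l n i))
    (h3 : Tendsto lpr (atTop ⊓ Filter.principal I) atTop) :
    ∃ i, Irrational (ξ i) := by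
  by_contra! hrat
  obtain ⟨b, hb, a, ha⟩ := exists_nat_mul_eq_int_of_not_irrational hrat
  have ha0 : a 0 ≠ 0 := by
    rw [← Int.cast_ne_zero (α := ℝ), ha]
    exact mul_ne_zero (by exact_mod_cast hb.ne') hξ0
  have : (atTop ⊓ 𝓟 I).NeBot :=
    frequently_mem_iff_neBot.mp (frequently_atTop.mpr fun m => (hI m).imp fun n ⟨h, h'⟩ => ⟨h', h⟩)
  obtain ⟨n, ⟨hsmall, hlarge⟩, hnI⟩ :=
    (((h1.eventually_lt_const (by positivity : (0 : ℝ) < 1 / b)).and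
      (h3.eventually_gt_atTop (a 0).natAbs)).and (mem_inf_of_right (mem_principal_self I))).exists
  have hndvd : ¬ (lpr n : ℤ) ∣ a 0 := fun hdvd =>
    ha0 (Int.natAbs_eq_zero.mp (Nat.eq_zero_of_dvd_of_lt (Int.ofNat_dvd_left.mp hdvd) hlarge))
  exact Int.sum_mul_ne_zero_of_emultiplicity_lt (Nat.prime_iff_prime_int.mp (hlpr n hnI)) (hl n)
    hndvd (h2 n hnI) (Int.sum_mul_eq_zero_of_abs_sum_mul_lt hb ha hsmall)
end

section
/- Let p be a prime, n a non-negative integer and x ∈ ℚ_p. Then the sequence N ↦ p^{−N} · Σ_{k=0}^{p^N − 1} (x + k)^n converges in ℚ_p, and its limit equals 𝔹_n(x), the value at x of the n-th Bernoulli polynomial. In particular, for x = 0 the limit equals the n-th Bernoulli number B_n. -/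
/-!
Telescoping the difference equation `𝔹_{n+1}(x + 1) - 𝔹_{n+1}(x) = (n + 1) xⁿ` shows that
`M⁻¹ ∑_{k<M} (x + k)ⁿ` is the difference quotient of `𝔹_{n+1} / (n + 1)` at `x` with step `M`.
Since `p ^ N → 0` in `ℚ_[p]`, these quotients converge to `𝔹_{n+1}'(x) / (n + 1) = 𝔹_n(x)`.
-/

open Filter Topology Polynomial

namespace Polynomial

variable {A : Type*} [CommRing A] [Algebra ℚ A]

theorem aeval_bernoulli_one_add (n : ℕ) (x : A) :
    aeval (1 + x) (bernoulli n) = aeval x (bernoulli n) + n * x ^ (n - 1) := by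
  simpa [aeval_comp] using congr(aeval x $(bernoulli_comp_one_add_X n))

theorem mul_sum_range_add_pow_eq_aeval_bernoulli_sub (n M : ℕ) (x : A) :
    (n + 1 : A) * ∑ k ∈ Finset.range M, (x + k) ^ n =
      aeval (x + M) (bernoulli (n + 1)) - aeval x (bernoulli (n + 1)) := by
  induction M with
  | zero => simp
  | succ M ih =>
    rw [Finset.sum_range_succ, mul_add, ih, Nat.cast_succ, add_comm (M : A) 1, ← add_assoc,
      add_comm x 1, add_assoc, aeval_bernoulli_one_add]
    push_cast
    ring

end Polynomial

theorem tendsto_inv_mul_sum_range_add_pow {𝕜 : Type*} [NontriviallyNormedField 𝕜] [Algebra ℚ 𝕜]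
    {ι : Type*} {l : Filter ι} {M : ι → ℕ} (hM : Tendsto (fun i ↦ (M i : 𝕜)) l (𝓝[≠] 0))
    (n : ℕ) (x : 𝕜) :
    Tendsto (fun i ↦ (M i : 𝕜)⁻¹ * ∑ k ∈ Finset.range (M i), (x + k) ^ n) l
      (𝓝 (aeval x (bernoulli n))) := by
  have := charZero_of_injective_algebraMap (algebraMap ℚ 𝕜).injective
  have hderiv := Polynomial.hasDerivAt_aeval (bernoulli (n + 1)) x
  rw [derivative_bernoulli_add_one, hasDerivAt_iff_tendsto_slope_zero] at hderiv
  convert (hderiv.comp hM).const_mul (n + 1 : 𝕜)⁻¹ using 1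
  · ext i
    simp only [Function.comp_apply, smul_eq_mul, ← mul_sum_range_add_pow_eq_aeval_bernoulli_sub]
    field_simp
  · simp [n.cast_add_one_ne_zero]

theorem Padic.tendsto_natCast_prime_pow_nhdsNE_zero (p : ℕ) [Fact p.Prime] :
    Tendsto (fun N : ℕ ↦ ((p ^ N : ℕ) : ℚ_[p])) atTop (𝓝[≠] 0) := by
  have hp : (p : ℚ_[p]) ≠ 0 := Nat.cast_ne_zero.2 (Fact.out : p.Prime).ne_zero
  refine tendsto_nhdsWithin_iff.2 ⟨?_, .of_forall fun N ↦ by simp [hp]⟩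
  push_cast
  exact tendsto_pow_atTop_nhds_zero_of_norm_lt_one (by simpa using Padic.norm_p_lt_one (p := p))

/-- Volkenborn integral of `(x+t)^n` is the Bernoulli polynomial.
For a prime `p`, `n ∈ ℕ` and `x ∈ ℚ_p`, the Volkenborn sums
`p^{-N} ∑_{k<p^N} (x+k)^n` converge to `𝔹_n(x)`; in particular for `x = 0`
they converge to the Bernoulli number `B_n`. -/
theorem volkenborn_integral_pow_eq_bernoulli
    (p : ℕ) [Fact p.Prime] (n : ℕ) :
    (∀ x : ℚ_[p],
      Tendsto (fun N : ℕ =>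
          ((p : ℚ_[p]) ^ N)⁻¹ * ∑ k ∈ Finset.range (p ^ N), (x + (k : ℚ_[p])) ^ n)
        atTop (nhds (Polynomial.aeval x (Polynomial.bernoulli n)))) ∧
    Tendsto (fun N : ℕ =>
        ((p : ℚ_[p]) ^ N)⁻¹ * ∑ k ∈ Finset.range (p ^ N), ((k : ℚ_[p])) ^ n)
      atTop (nhds ((bernoulli n : ℚ) : ℚ_[p])) := by
  have key (x : ℚ_[p]) := tendsto_inv_mul_sum_range_add_pow
    (Padic.tendsto_natCast_prime_pow_nhdsNE_zero p) n x
  push_cast at key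
  refine ⟨key, ?_⟩
  simpa [← coeff_zero_eq_aeval_zero', coeff_zero_eq_eval_zero, bernoulli_eval_zero] using key 0
end

section
/- Let n be a non-negative integer and let a, b be integers with b > 0. Consider the polynomial F(t) = b^n · (∏_{q | b, q prime} q^{⌊n/(q−1)⌋}) · (t + a/b)_n / n!, where (α)_n = α(α+1)⋯(α+n−1) is the Pochhammer symbol. Then for any integer k′ ∈ {0, 1, …, n−1}, any integer k ∈ ℤ and any integer λ ≥ 0, the polynomial F(t)/(t + a/b + k′) (which is again a polynomial with rational coefficients, since t + a/b + k′ divides F) satisfies: d_n^{λ+1} · (1/λ!) · (d/dt)^λ ( F(t)/(t + a/b + k′) ) evaluated at t = −k is an integer. Here d_n = lcm(1, 2, …, n). -/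
/-!
With `x = a/b` and `c = bⁿ ∏_{q ∣ b} q^⌊n/(q-1)⌋ / n!`, the quotient is
`G = c ∏_{i < n, i ≠ k'} (t + x + i)`, and `(1/λ!) G^{(λ)}(-k)` is the `λ`-th Taylor coefficient
of `G` at `-k`: `c` times an elementary symmetric function of degree `n - 1 - λ` in the numbers
`x + i - k = (a' + i b)/b`, `a' = a - k b`. Each of its monomials, multiplied by `d_n^{λ+1}`, is an
integer over `n!`, and `n!` divides that integer prime by prime. For `p ∣ b` Legendre's bound
`v_p(n!) ≤ n/(p-1)` is absorbed by the factor `p^⌊n/(p-1)⌋`. For `p ∤ b`, at least `⌊n/p^j⌋` of the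
`n` terms `a' + i b` (`i < n`) are divisible by `p^j`, the monomial misses at most `λ + 1` of them,
and the resulting loss of `λ + 1` at each level `j ≤ log_p n` is paid for by
`v_p(d_n^{λ+1}) ≥ (λ + 1) log_p n`.
-/

open Polynomial

/-- `d_n = lcm(1, 2, …, n)`. -/
def dd (n : ℕ) : ℕ := (Finset.Icc 1 n).lcm id

open Finset Nat

theorem dd_ne_zero (n : ℕ) : dd n ≠ 0 := by
  simp [dd, Finset.lcm_eq_zero_iff]

theorem pow_log_dvd_dd (p n : ℕ) : p ^ log p n ∣ dd n := by
  rcases eq_or_ne n 0 with rfl | hn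
  · simp
  have hpos : 0 < p ^ log p n := by
    rcases p.eq_zero_or_pos with rfl | hp
    · simp
    · positivity
  exact Finset.dvd_lcm (f := id) (mem_Icc.2 ⟨hpos, pow_log_le_self p hn⟩)

theorem div_le_card_filter_dvd_add_mul {m : ℕ} (hm : 0 < m) {b : ℤ} (hmb : IsCoprime (m : ℤ) b)
    (a : ℤ) (n : ℕ) : n / m ≤ #{i ∈ range n | (m : ℤ) ∣ a + ((i : ℕ) : ℤ) * b} := by
  have : NeZero m := ⟨hm.ne'⟩
  obtain ⟨u, v, huv⟩ := hmb
  -- `r ≡ -a b⁻¹ (mod m)`, so each `r + t m` is a solution; those with `t < n / m` lie below `n`.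
  set r : ℕ := ((-a * v : ℤ) : ZMod m).val
  have hdvd (t : ℕ) : (m : ℤ) ∣ a + (r + t * m : ℕ) * b := by
    have hvb : (v : ZMod m) * b = 1 := by simpa using congrArg (Int.cast : ℤ → ZMod m) huv
    rw [← ZMod.intCast_zmod_eq_zero_iff_dvd]
    push_cast [r, ZMod.natCast_val, ZMod.cast_id', ZMod.natCast_self]
    linear_combination (-a) * hvb
  calc n / m = #(range (n / m)) := (card_range _).symm
    _ ≤ _ := by
      refine card_le_card_of_injOn (fun t : ℕ => r + t * m) (fun t ht => ?_) fun t₁ _ t₂ _ h => ?_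
      · have hr : r < m := ZMod.val_lt _
        have ht' : t * m + m ≤ n := by
          rw [← succ_mul]; exact (Nat.le_div_iff_mul_le hm).1 (mem_range.1 ht)
        simp only [coe_filter, mem_range]
        exact ⟨by omega, hdvd t⟩
      · exact Nat.eq_of_mul_eq_mul_right hm (Nat.add_left_cancel h)

theorem card_filter_pow_dvd_le_factorization {p x : ℕ} (hp : p.Prime) (hx : x ≠ 0)
    {J : Finset ℕ} (hJ : 0 ∉ J) : #{j ∈ J | p ^ j ∣ x} ≤ x.factorization p := by
  calc #{j ∈ J | p ^ j ∣ x} ≤ #(Icc 1 (x.factorization p)) := by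
        refine card_le_card fun j hj => ?_
        obtain ⟨hjJ, hpj⟩ := mem_filter.1 hj
        exact mem_Icc.2 ⟨one_le_iff_ne_zero.2 (ne_of_mem_of_not_mem hjJ hJ),
          (hp.pow_dvd_iff_le_factorization hx).1 hpj⟩
    _ = x.factorization p := by simp

theorem sum_card_filter_pow_dvd_le_factorization_prod {ι : Type*} {p : ℕ} (hp : p.Prime)
    {J : Finset ℕ} (hJ : 0 ∉ J) {S : Finset ι} {f : ι → ℕ} (hf : ∀ i ∈ S, f i ≠ 0) :
    ∑ j ∈ J, #{i ∈ S | p ^ j ∣ f i} ≤ (∏ i ∈ S, f i).factorization p := by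
  rw [factorization_prod_apply hf]
  calc ∑ j ∈ J, #{i ∈ S | p ^ j ∣ f i} = ∑ i ∈ S, #{j ∈ J | p ^ j ∣ f i} := by
        simp only [card_filter]; exact sum_comm
    _ ≤ _ := sum_le_sum fun i hi => card_filter_pow_dvd_le_factorization hp (hf i hi) hJ

theorem factorization_factorial_le_of_dvd {p m : ℕ} (hp : p.Prime) (hpm : p ∣ m) (hm : m ≠ 0)
    (n : ℕ) :
    (n !).factorization p ≤ (∏ q ∈ m.primeFactors, q ^ (n / (q - 1))).factorization p := by
  have hprod : ∏ q ∈ m.primeFactors, q ^ (n / (q - 1)) ≠ 0 :=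
    prod_ne_zero_iff.2 fun q hq => pow_ne_zero _ (prime_of_mem_primeFactors hq).ne_zero
  have hdvd : p ^ (n / (p - 1)) ∣ ∏ q ∈ m.primeFactors, q ^ (n / (q - 1)) :=
    dvd_prod_of_mem _ (mem_primeFactors.2 ⟨hp, hpm, hm⟩)
  exact (factorization_factorial_le_div_pred hp n).trans
    ((hp.pow_dvd_iff_le_factorization hprod).1 hdvd)

theorem factorization_factorial_le_of_not_dvd {p n r : ℕ} (hp : p.Prime) {a b : ℤ}
    (hpb : ¬(p : ℤ) ∣ b) {S : Finset ℕ} (hS : S ⊆ range n) (hcard : n ≤ #S + r)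
    (hT : ∏ i ∈ S, (a + i * b) ≠ 0) :
    (n !).factorization p ≤ r * log p n + (∏ i ∈ S, (a + i * b)).natAbs.factorization p := by
  have hcop (j : ℕ) : IsCoprime ((p ^ j : ℕ) : ℤ) b := by
    push_cast
    exact ((Prime.coprime_iff_not_dvd (Nat.prime_iff_prime_int.1 hp)).2 hpb).pow_left
  have hlevel (j : ℕ) : n / p ^ j ≤ r + #{i ∈ S | p ^ j ∣ (a + ((i : ℕ) : ℤ) * b).natAbs} := by
    calc n / p ^ j ≤ #{i ∈ range n | ((p ^ j : ℕ) : ℤ) ∣ a + ((i : ℕ) : ℤ) * b} :=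
          div_le_card_filter_dvd_add_mul (pow_pos hp.pos j) (hcop j) a n
      _ ≤ #(range n \ S) + #{i ∈ S | p ^ j ∣ (a + ((i : ℕ) : ℤ) * b).natAbs} := by
          refine (card_le_card fun i hi => ?_).trans (card_union_le _ _)
          simp only [mem_filter, mem_union, mem_sdiff, Int.natCast_dvd] at hi ⊢
          tauto
      _ ≤ r + _ := by
          rw [card_sdiff_of_subset hS, card_range]; omega
  have hlevels : ∑ j ∈ Ico 1 (log p n + 1), #{i ∈ S | p ^ j ∣ (a + ((i : ℕ) : ℤ) * b).natAbs}
      ≤ (∏ i ∈ S, (a + i * b)).natAbs.factorization p := by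
    rw [show (∏ i ∈ S, (a + i * b)).natAbs = ∏ i ∈ S, (a + i * b).natAbs from
      map_prod Int.natAbsHom _ _]
    exact sum_card_filter_pow_dvd_le_factorization_prod hp (by simp)
      fun i hi => Int.natAbs_ne_zero.2 (prod_ne_zero_iff.1 hT i hi)
  calc (n !).factorization p = ∑ j ∈ Ico 1 (log p n + 1), n / p ^ j :=
        factorization_factorial hp (lt_succ_self _)
    _ ≤ ∑ j ∈ Ico 1 (log p n + 1), (r + #{i ∈ S | p ^ j ∣ (a + ((i : ℕ) : ℤ) * b).natAbs}) :=
        sum_le_sum fun j _ => hlevel j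
    _ ≤ _ := by
        rw [sum_add_distrib, sum_const, card_Ico, smul_eq_mul, add_tsub_cancel_right, mul_comm]
        exact Nat.add_le_add_left hlevels _

theorem factorial_dvd_dd_pow_mul_prod {n r : ℕ} {a b : ℤ} (hb : b ≠ 0) {S : Finset ℕ}
    (hS : S ⊆ range n) (hcard : n ≤ #S + r) :
    (n ! : ℤ) ∣ (dd n ^ r * ∏ q ∈ b.natAbs.primeFactors, q ^ (n / (q - 1)) : ℕ) *
      ∏ i ∈ S, (a + i * b) := by
  set P := ∏ q ∈ b.natAbs.primeFactors, q ^ (n / (q - 1))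
  set T := ∏ i ∈ S, (a + i * b)
  rcases eq_or_ne T 0 with hT | hT
  · simp [hT]
  have hP : P ≠ 0 :=
    prod_ne_zero_iff.2 fun q hq => pow_ne_zero _ (prime_of_mem_primeFactors hq).ne_zero
  have hd : dd n ^ r ≠ 0 := pow_ne_zero _ (dd_ne_zero n)
  have hT' : T.natAbs ≠ 0 := Int.natAbs_ne_zero.2 hT
  rw [← Int.natAbs_dvd_natAbs, Int.natAbs_mul, Int.natAbs_natCast, Int.natAbs_natCast,
    ← factorization_prime_le_iff_dvd (factorial_ne_zero n) (by positivity)]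
  intro p hp
  rw [Nat.factorization_mul (mul_ne_zero hd hP) hT', Nat.factorization_mul hd hP,
    Nat.factorization_pow]
  simp only [Finsupp.add_apply, Finsupp.smul_apply, smul_eq_mul]
  by_cases hpb : (p : ℤ) ∣ b
  · have : (n !).factorization p ≤ P.factorization p :=
      factorization_factorial_le_of_dvd hp (Int.natCast_dvd.1 hpb) (Int.natAbs_ne_zero.2 hb) n
    omega
  · have hlog : log p n ≤ (dd n).factorization p :=
      (hp.pow_dvd_iff_le_factorization (dd_ne_zero n)).1 (pow_log_dvd_dd p n)
    have : (n !).factorization p ≤ r * log p n + T.natAbs.factorization p :=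
      factorization_factorial_le_of_not_dvd hp hpb hS hcard hT
    have := Nat.mul_le_mul_left r hlog
    omega

theorem exists_int_dd_pow_mul_prod_eq {n r : ℕ} {a b : ℤ} (hb : b ≠ 0) {t : Finset ℕ}
    (ht : t ⊆ range n) (hcard : n ≤ #t + r) :
    ∃ z : ℤ, (dd n : ℚ) ^ r *
      ((b : ℚ) ^ n * (∏ q ∈ b.natAbs.primeFactors, (q : ℚ) ^ (n / (q - 1))) / (n ! : ℚ)) *
      ∏ i ∈ t, ((a : ℚ) / b + i) = z := by
  obtain ⟨N, hN⟩ := factorial_dvd_dd_pow_mul_prod (a := a) hb ht hcard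
  have hN' : (dd n : ℚ) ^ r * (∏ q ∈ b.natAbs.primeFactors, (q : ℚ) ^ (n / (q - 1))) *
      ∏ i ∈ t, ((a : ℚ) + i * b) = n ! * N := by exact_mod_cast hN
  have hbq : (b : ℚ) ≠ 0 := Int.cast_ne_zero.2 hb
  have hprod : ∏ i ∈ t, ((a : ℚ) / b + i) = (∏ i ∈ t, ((a : ℚ) + i * b)) / (b : ℚ) ^ #t := by
    rw [← prod_const, ← prod_div_distrib]
    exact prod_congr rfl fun i _ => by field_simp
  refine ⟨b ^ (n - #t) * N, ?_⟩
  rw [hprod, ← pow_sub_mul_pow (b : ℚ) (by simpa using card_le_card ht)]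
  push_cast
  field_simp
  linear_combination hN'

theorem ascPochhammer_comp_X_add_C {R : Type*} [CommSemiring R] (n : ℕ) (x : R) :
    (ascPochhammer R n).comp (X + C x) = ∏ i ∈ range n, (X + C (x + i)) := by
  induction n with
  | zero => simp
  | succ n ih =>
    rw [ascPochhammer_succ_right, mul_comp, ih, prod_range_succ]
    simp [add_assoc]

theorem iterate_derivative_eval_eq_factorial_mul_coeff_taylor {R : Type*} [CommSemiring R]
    (f : R[X]) (r : R) (k : ℕ) : (derivative^[k] f).eval r = k ! * (taylor r f).coeff k := by
  rw [taylor_coeff, ← factorial_smul_hasseDeriv, LinearMap.smul_apply, eval_smul, nsmul_eq_mul]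

theorem taylor_prod_X_add_C {R ι : Type*} [CommSemiring R] (s : Finset ι) (y : ι → R) (r : R) :
    taylor r (∏ i ∈ s, (X + C (y i))) = ∏ i ∈ s, (X + C (y i + r)) := by
  simp only [taylor_apply, Polynomial.prod_comp, add_comp, X_comp, C_comp, C_add]
  exact prod_congr rfl fun i _ => by ring

theorem exists_int_dd_pow_mul_coeff_prod_eq {n : ℕ} {a b : ℤ} (hb : b ≠ 0) {S : Finset ℕ}
    (hS : S ⊆ range n) (hcard : n ≤ #S + 1) (k : ℕ) :
    ∃ z : ℤ, (dd n : ℚ) ^ (k + 1) *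
      ((b : ℚ) ^ n * (∏ q ∈ b.natAbs.primeFactors, (q : ℚ) ^ (n / (q - 1))) / (n ! : ℚ)) *
      (∏ i ∈ S, (X + C ((a : ℚ) / b + i))).coeff k = z := by
  rcases le_or_gt k #S with hk | hk
  · rw [prod_X_add_C_coeff _ _ hk, mul_sum]
    choose! z hz using fun t (ht : t ∈ S.powersetCard (#S - k)) =>
      exists_int_dd_pow_mul_prod_eq (r := k + 1) (a := a) hb
        ((mem_powersetCard.1 ht).1.trans hS) (by rw [(mem_powersetCard.1 ht).2]; omega)
    exact ⟨∑ t ∈ S.powersetCard (#S - k), z t, by rw [Int.cast_sum]; exact sum_congr rfl hz⟩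
  · refine ⟨0, ?_⟩
    have hmonic (i : ℕ) : (X + C ((a : ℚ) / b + i)).Monic := monic_X_add_C _
    rw [coeff_eq_zero_of_natDegree_lt, mul_zero, Int.cast_zero]
    rw [natDegree_prod_of_monic _ _ fun i _ => hmonic i]
    simpa only [natDegree_X_add_C, sum_const, smul_eq_mul, mul_one] using hk

/-- Lemma 5.2(2): for
`F(t) = b^n · ∏_{q ∣ b} q^{⌊n/(q-1)⌋} · (t + a/b)_n / n!`, any `k' ∈ {0,…,n-1}`,
`k ∈ ℤ`, `λ ≥ 0`: `t + a/b + k'` divides `F`, and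
`d_n^{λ+1} · (1/λ!) (d/dt)^λ (F/(t+a/b+k'))` evaluated at `t = -k` is an integer. -/
theorem dn_pow_mul_divided_deriv_quotient_int
    (n : ℕ) (a b : ℤ) (hb : 0 < b)
    (k' : ℕ) (hk' : k' < n) (k : ℤ) (lam : ℕ) :
    ∃ G : Polynomial ℚ,
      (Polynomial.C ((b : ℚ) ^ n *
          (∏ q ∈ b.natAbs.primeFactors, (q : ℚ) ^ (n / (q - 1))) /
          (Nat.factorial n : ℚ)) *
        ((ascPochhammer ℚ n).comp (Polynomial.X + Polynomial.C ((a : ℚ) / (b : ℚ)))))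
        = (Polynomial.X + Polynomial.C ((a : ℚ) / (b : ℚ) + (k' : ℚ))) * G ∧
      ∃ z : ℤ,
        (dd n : ℚ) ^ (lam + 1) * ((1 : ℚ) / (Nat.factorial lam : ℚ)) *
          (((fun Q : Polynomial ℚ => Polynomial.derivative Q)^[lam] G).eval (-(k : ℚ)))
          = (z : ℚ) := by
  have hbq : (b : ℚ) ≠ 0 := by positivity
  have hshift (i : ℕ) : (a : ℚ) / b + i + -k = ((a - k * b : ℤ) : ℚ) / b + i := by
    push_cast; field_simp; ring
  obtain ⟨z, hz⟩ := exists_int_dd_pow_mul_coeff_prod_eq (a := a - k * b) hb.ne'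
    (erase_subset k' _) (by rw [card_erase_of_mem (mem_range.2 hk'), card_range]; omega) lam
  set c : ℚ := (b : ℚ) ^ n * (∏ q ∈ b.natAbs.primeFactors, (q : ℚ) ^ (n / (q - 1))) / (n ! : ℚ)
  set S := (range n).erase k'
  refine ⟨C c * ∏ i ∈ S, (X + C ((a : ℚ) / b + i)), ?_, z, ?_⟩
  · rw [ascPochhammer_comp_X_add_C, ← mul_prod_erase _ _ (mem_range.2 hk')]
    ring
  rw [iterate_derivative_eval_eq_factorial_mul_coeff_taylor, taylor_mul, taylor_C,
    taylor_prod_X_add_C, coeff_C_mul]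
  simp only [hshift, ← hz]
  field_simp
end
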